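/- arXiv:1202.4869 — 2 statements merged into one kernel-verified Lean document; each statement's English description precedes it below -/
import Mathlib

section
/- (Large-viscosity global bound) Suppose 𝒜 : [0,∞) → [0,∞) is absolutely continuous, ∫₀^∞ 𝒜(t) dt ≤ M, and 𝒜 satisfies 𝒜'(t) + (μ − μ^{1/2}𝒜(t)) D(t) ≤ C' 𝒜(t) with D(t) ≥ 0 whenever it satisfies 𝒜(t) ≤ μ^{1/2} (more precisely, 𝒜'(t) ≤ C'𝒜(t) holds whenever 𝒜(t) ≤ μ^{1/2}). If μ^{1/2} ≥ 𝒜(0) + C'M + 4M + μ₀^{1/2}, then 𝒜(t) ≤ μ^{1/2} for all t ≥ 0. -/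
/-!
Let `T` be the first time at which `𝒜` reaches `√μ`. Up to `T` the differential inequality
`𝒜' ≤ C' 𝒜` holds, so integrating it gives `𝒜 T ≤ 𝒜 0 + C' ∫₀ᵀ 𝒜 ≤ 𝒜 0 + C' M`, which is strictly
below `√μ` by the largeness condition; hence no such `T` exists.
-/

open MeasureTheory Set

theorem forall_lt_of_forall_Ico_le {f : ℝ → ℝ} {a c : ℝ} (hf : ContinuousOn f (Ici a))
    (h : ∀ T, a ≤ T → (∀ s ∈ Ico a T, f s ≤ c) → f T < c) : ∀ t, a ≤ t → f t < c := by
  by_contra! ⟨t, hat, hct⟩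
  set B := Ici a ∩ f ⁻¹' Ici c
  have hBdd : BddBelow B := ⟨a, fun _ hx => hx.1⟩
  have hfirst : sInf B ∈ B :=
    (hf.preimage_isClosed_of_isClosed isClosed_Ici isClosed_Ici).csInf_mem ⟨t, hat, hct⟩ hBdd
  refine (h _ hfirst.1 fun s hs => ?_).not_ge hfirst.2
  by_contra! hcs
  exact hs.2.not_ge (csInf_le hBdd ⟨hs.1, hcs.le⟩)

theorem le_add_mul_integral_of_deriv_le_mul {f f' : ℝ → ℝ} {a b C : ℝ} (hab : a ≤ b)
    (hf : ContinuousOn f (Icc a b)) (hderiv : ∀ x ∈ Ioo a b, HasDerivAt f (f' x) x)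
    (hint : IntegrableOn f (Icc a b)) (hle : ∀ x ∈ Ioo a b, f' x ≤ C * f x) :
    f b ≤ f a + C * ∫ x in a..b, f x := by
  have := intervalIntegral.sub_le_integral_of_hasDeriv_right_of_le hab hf
    (fun x hx => (hderiv x hx).hasDerivWithinAt) (hint.const_mul C) hle
  rw [intervalIntegral.integral_const_mul] at this
  linarith

theorem intervalIntegral_le_setIntegral_Ici {f : ℝ → ℝ} {a b : ℝ} (hab : a ≤ b)
    (hf : IntegrableOn f (Ici a)) (hpos : ∀ x ∈ Ici a, 0 ≤ f x) :
    ∫ x in a..b, f x ≤ ∫ x in Ici a, f x := by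
  rw [intervalIntegral.integral_of_le hab]
  exact setIntegral_mono_set hf (ae_restrict_of_forall_mem measurableSet_Ici hpos)
    (.of_forall (Ioc_subset_Icc_self.trans Icc_subset_Ici_self))

theorem large_viscosity_global_bound_general (μ μ₀ C' M : ℝ)
    (hμ₀ : 0 < μ₀) (hC' : 0 < C') (hM : 0 ≤ M)
    (𝒜 𝒜' : ℝ → ℝ) (hpos : ∀ t, 0 ≤ 𝒜 t)
    (hderiv : ∀ t, 0 ≤ t → HasDerivAt 𝒜 (𝒜' t) t)
    (hineq : ∀ t, 0 ≤ t → 𝒜 t ≤ Real.sqrt μ → 𝒜' t ≤ C' * 𝒜 t)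
    (hint : IntegrableOn 𝒜 (Set.Ici (0:ℝ)))
    (hintM : (∫ t in Set.Ici (0:ℝ), 𝒜 t) ≤ M)
    (hlarge : 𝒜 0 + C' * M + 4 * M + Real.sqrt μ₀ ≤ Real.sqrt μ) :
    ∀ t, 0 ≤ t → 𝒜 t ≤ Real.sqrt μ := by
  have hcont : ContinuousOn 𝒜 (Ici 0) := fun t ht =>
    (hderiv t ht).continuousAt.continuousWithinAt
  have hgap : 𝒜 0 + C' * M < Real.sqrt μ := by
    linarith [Real.sqrt_pos.mpr hμ₀]
  refine fun t ht => (forall_lt_of_forall_Ico_le hcont (fun T hT hbelow => ?_) t ht).le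
  calc 𝒜 T ≤ 𝒜 0 + C' * ∫ s in 0..T, 𝒜 s :=
        le_add_mul_integral_of_deriv_le_mul hT (hcont.mono Icc_subset_Ici_self)
          (fun x hx => hderiv x hx.1.le) (hint.mono_set Icc_subset_Ici_self)
          (fun x hx => hineq x hx.1.le (hbelow x ⟨hx.1.le, hx.2⟩))
    _ ≤ 𝒜 0 + C' * M := by
        gcongr
        exact (intervalIntegral_le_setIntegral_Ici hT hint fun x _ => hpos x).trans hintM
    _ < Real.sqrt μ := hgap

/-- Large-viscosity global bound: if `𝒜' ≤ C'𝒜` whenever `𝒜 ≤ √μ`,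
`∫₀^∞ 𝒜 ≤ M`, and `√μ ≥ 𝒜(0) + C'M + 4M + √μ₀`, then `𝒜(t) ≤ √μ` for all `t ≥ 0`. -/
theorem large_viscosity_global_bound (μ μ₀ C' M : ℝ)
    (hμ₀ : 0 < μ₀) (hμ : μ₀ ≤ μ) (hC' : 0 < C') (hM : 0 ≤ M)
    (𝒜 𝒜' : ℝ → ℝ) (hpos : ∀ t, 0 ≤ 𝒜 t)
    (hderiv : ∀ t, 0 ≤ t → HasDerivAt 𝒜 (𝒜' t) t)
    (hineq : ∀ t, 0 ≤ t → 𝒜 t ≤ Real.sqrt μ → 𝒜' t ≤ C' * 𝒜 t)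
    (hint : IntegrableOn 𝒜 (Set.Ici (0:ℝ)))
    (hintM : (∫ t in Set.Ici (0:ℝ), 𝒜 t) ≤ M)
    (hlarge : 𝒜 0 + C' * M + 4 * M + Real.sqrt μ₀ ≤ Real.sqrt μ) :
    ∀ t, 0 ≤ t → 𝒜 t ≤ Real.sqrt μ :=
  large_viscosity_global_bound_general μ μ₀ C' M hμ₀ hC' hM 𝒜 𝒜' hpos hderiv hineq hint hintM hlarge
end

section
/- (Extension of the Łojasiewicz–Simon inequality from an H⁴- to an H²-neighborhood) Let ψ be a critical point of E (i.e., δE/δψ = 0), and suppose there exist β₁ > 0 and θ ∈ (0, 1/2) such that ‖δE/δφ‖_{L²} ≥ |E(φ) − E(ψ)|^{1−θ} for all φ ∈ H⁴_p with ‖φ − ψ‖_{H⁴} < β₁. Assume further: (a) the elliptic estimate ‖φ−ψ‖_{H⁴} ≤ M(‖Δ²(φ−ψ)‖ + ‖φ−ψ‖); (b) the maps φ ↦ H(φ) and φ ↦ E(φ) are Lipschitz in ‖·‖_{H²} on the unit H²-ball around ψ, where δE/δφ = kεΔ²φ + H(φ). Then there exists β > 0 such that ‖δE/δφ‖_{L²}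 ≥ |E(φ) − E(ψ)|^{1−θ} for all φ ∈ H⁴_p with merely ‖φ − ψ‖_{H²} < β. -/
open MeasureTheory

noncomputable section

/-- The unit cube `[0,1]³` in `ℝ³` (modeled as `Fin 3 → ℝ`). -/
def Q3 : Set (Fin 3 → ℝ) := Set.univ.pi fun _ => Set.Icc (0:ℝ) 1

/-- Partial derivative in direction `i`. -/
def pd (i : Fin 3) (φ : (Fin 3 → ℝ) → ℝ) : (Fin 3 → ℝ) → ℝ :=
  fun x => fderiv ℝ φ x (Pi.single i 1)

/-- Gradient. -/
def grad (φ : (Fin 3 → ℝ) → ℝ) : (Fin 3 → ℝ) → (Fin 3 → ℝ) :=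
  fun x i => pd i φ x

/-- Laplacian. -/
def lap (φ : (Fin 3 → ℝ) → ℝ) : (Fin 3 → ℝ) → ℝ :=
  fun x => ∑ i, pd i (pd i φ) x

/-- Periodicity with period 1 in each coordinate direction. -/
def Periodic3 (φ : (Fin 3 → ℝ) → ℝ) : Prop :=
  ∀ (x : Fin 3 → ℝ) (i : Fin 3), φ (x + Pi.single i 1) = φ x

/-- `L²(Q)` norm of a scalar function. -/
def L2 (f : (Fin 3 → ℝ) → ℝ) : ℝ := Real.sqrt (∫ x in Q3, (f x) ^ 2)

/-- `L²(Q)` norm of a vector field. -/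
def L2v (f : (Fin 3 → ℝ) → (Fin 3 → ℝ)) : ℝ := Real.sqrt (∫ x in Q3, ∑ i, (f x i) ^ 2)

/-- `H¹(Q)` norm. -/
def H1norm (φ : (Fin 3 → ℝ) → ℝ) : ℝ :=
  Real.sqrt (∫ x in Q3, (φ x)^2 + ∑ i, (pd i φ x)^2)

/-- `H²(Q)` norm. -/
def H2norm (φ : (Fin 3 → ℝ) → ℝ) : ℝ :=
  Real.sqrt (∫ x in Q3, (φ x)^2 + (∑ i, (pd i φ x)^2) + ∑ i, ∑ j, (pd i (pd j φ) x)^2)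

/-- `H³(Q)` norm. -/
def H3norm (φ : (Fin 3 → ℝ) → ℝ) : ℝ :=
  Real.sqrt (∫ x in Q3, (φ x)^2 + (∑ i, (pd i φ x)^2) + (∑ i, ∑ j, (pd i (pd j φ) x)^2)
    + ∑ i, ∑ j, ∑ l, (pd i (pd j (pd l φ)) x)^2)

/-- `H⁴(Q)` norm. -/
def H4norm (φ : (Fin 3 → ℝ) → ℝ) : ℝ :=
  Real.sqrt (∫ x in Q3, (φ x)^2 + (∑ i, (pd i φ x)^2) + (∑ i, ∑ j, (pd i (pd j φ) x)^2)
    + (∑ i, ∑ j, ∑ l, (pd i (pd j (pd l φ)) x)^2)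
    + ∑ i, ∑ j, ∑ l, ∑ m, (pd i (pd j (pd l (pd m φ))) x)^2)

/-- `f(φ) = −εΔφ + ε⁻¹(φ²−1)φ`. -/
def fF (ε : ℝ) (φ : (Fin 3 → ℝ) → ℝ) : (Fin 3 → ℝ) → ℝ :=
  fun x => -ε * lap φ x + ε⁻¹ * ((φ x)^2 - 1) * φ x

/-- `g(φ) = −Δf(φ) + ε⁻²(3φ²−1)f(φ)`. -/
def gF (ε : ℝ) (φ : (Fin 3 → ℝ) → ℝ) : (Fin 3 → ℝ) → ℝ :=
  fun x => -(lap (fF ε φ) x) + (ε^2)⁻¹ * (3*(φ x)^2 - 1) * fF ε φ x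

/-- Volume functional `A(φ) = ∫_Q φ`. -/
def Afun (φ : (Fin 3 → ℝ) → ℝ) : ℝ := ∫ x in Q3, φ x

/-- Surface-area functional `B(φ)`. -/
def Bfun (ε : ℝ) (φ : (Fin 3 → ℝ) → ℝ) : ℝ :=
  ∫ x in Q3, (ε/2) * (∑ i, (pd i φ x)^2) + (1/(4*ε)) * ((φ x)^2 - 1)^2

/-- The penalized elastic bending energy `E(φ)`. -/
def Efun (k ε M₁ M₂ α β : ℝ) (φ : (Fin 3 → ℝ) → ℝ) : ℝ :=
  (k/(2*ε)) * (∫ x in Q3, (fF ε φ x)^2)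
    + (M₁/2) * (Afun φ - α)^2 + (M₂/2) * (Bfun ε φ - β)^2

/-- Variational derivative `δE/δφ = k g(φ) + M₁(A(φ)−α) + M₂(B(φ)−β) f(φ)`. -/
def varE (k ε M₁ M₂ α β : ℝ) (φ : (Fin 3 → ℝ) → ℝ) : (Fin 3 → ℝ) → ℝ :=
  fun x => k * gF ε φ x + M₁ * (Afun φ - α) + M₂ * (Bfun ε φ - β) * fF ε φ x

/-- The lower-order part `H(φ) = δE/δφ − kεΔ²φ`. -/
def Hlow (k ε M₁ M₂ α β : ℝ) (φ : (Fin 3 → ℝ) → ℝ) : (Fin 3 → ℝ) → ℝ :=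
  fun x => varE k ε M₁ M₂ α β φ x - k * ε * lap (lap φ) x


section LSaux

lemma isCompact_Q3 : IsCompact Q3 := isCompact_univ_pi fun _ => isCompact_Icc

lemma measurableSet_Q3 : MeasurableSet Q3 := isCompact_Q3.isClosed.measurableSet

lemma finQ3 : IsFiniteMeasure (volume.restrict Q3) :=
  ⟨by rw [Measure.restrict_apply_univ]; exact isCompact_Q3.measure_lt_top⟩

lemma intOn {f : (Fin 3 → ℝ) → ℝ} (hf : Continuous f) : IntegrableOn f Q3 :=
  hf.continuousOn.integrableOn_compact isCompact_Q3

lemma memL2 {f : (Fin 3 → ℝ) → ℝ} (hf : Continuous f) :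
    MemLp f (ENNReal.ofReal 2) (volume.restrict Q3) := by
  haveI := finQ3
  obtain ⟨C, hC⟩ := isCompact_Q3.exists_bound_of_continuousOn hf.continuousOn
  exact MemLp.of_bound hf.aestronglyMeasurable C ((ae_restrict_mem measurableSet_Q3).mono hC)

lemma contDiff_pd {f : (Fin 3 → ℝ) → ℝ} (hf : ContDiff ℝ (⊤ : ℕ∞) f) (i : Fin 3) :
    ContDiff ℝ (⊤ : ℕ∞) (pd i f) :=
  (hf.fderiv_right (mod_cast le_top)).clm_apply contDiff_const

lemma pd_sub {f g : (Fin 3 → ℝ) → ℝ} (hf : ContDiff ℝ (⊤ : ℕ∞) f) (hg : ContDiff ℝ (⊤ : ℕ∞) g) (i : Fin 3) :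
    pd i (f - g) = pd i f - pd i g := by
  funext x
  have h : fderiv ℝ (fun y => f y - g y) x = fderiv ℝ f x - fderiv ℝ g x :=
    fderiv_sub (hf.differentiable (by simp) x) (hg.differentiable (by simp) x)
  simp only [pd, Pi.sub_apply]
  rw [show (f - g) = fun y => f y - g y from rfl, h]
  simp

lemma contDiff_lap {f : (Fin 3 → ℝ) → ℝ} (hf : ContDiff ℝ (⊤ : ℕ∞) f) : ContDiff ℝ (⊤ : ℕ∞) (lap f) :=
  ContDiff.sum fun i _ => contDiff_pd (contDiff_pd hf i) i

lemma lap_sub {f g : (Fin 3 → ℝ) → ℝ} (hf : ContDiff ℝ (⊤ : ℕ∞) f) (hg : ContDiff ℝ (⊤ : ℕ∞) g) :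
    lap (f - g) = lap f - lap g := by
  funext x
  simp only [lap, Pi.sub_apply, ← Finset.sum_sub_distrib]
  refine Finset.sum_congr rfl fun i _ => ?_
  rw [pd_sub hf hg i, pd_sub (contDiff_pd hf i) (contDiff_pd hg i) i]
  simp

lemma lap_lap_sub {f g : (Fin 3 → ℝ) → ℝ} (hf : ContDiff ℝ (⊤ : ℕ∞) f) (hg : ContDiff ℝ (⊤ : ℕ∞) g) :
    lap (lap (f - g)) = lap (lap f) - lap (lap g) := by
  rw [lap_sub hf hg, lap_sub (contDiff_lap hf) (contDiff_lap hg)]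

lemma L2_nonneg (f : (Fin 3 → ℝ) → ℝ) : 0 ≤ L2 f := Real.sqrt_nonneg _

lemma L2_cauchy_schwarz {f g : (Fin 3 → ℝ) → ℝ} (hf : Continuous f) (hg : Continuous g) :
    ∫ x in Q3, f x * g x ≤ L2 f * L2 g := by
  have h2 : (2:ℝ).HolderConjugate 2 := Real.HolderConjugate.two_two
  have step1 : ∫ x in Q3, f x * g x ≤ ∫ x in Q3, |f x| * |g x| := by
    refine integral_mono (intOn (hf.mul hg)) (intOn (hf.abs.mul hg.abs)) fun x => ?_
    rw [← abs_mul]; exact le_abs_self _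
  have step2 := integral_mul_le_Lp_mul_Lq_of_nonneg (μ := volume.restrict Q3) h2
    (Filter.Eventually.of_forall fun x => abs_nonneg (f x))
    (Filter.Eventually.of_forall fun x => abs_nonneg (g x))
    (memL2 hf.abs) (memL2 hg.abs)
  have e1 : ∫ x in Q3, |f x| ^ (2:ℝ) = ∫ x in Q3, (f x)^2 := by
    refine integral_congr_ae (Filter.Eventually.of_forall fun x => ?_)
    show |f x| ^ (2:ℝ) = (f x)^2
    rw [show (2:ℝ) = ((2:ℕ):ℝ) by norm_num, Real.rpow_natCast, sq_abs]
  have e2 : ∫ x in Q3, |g x| ^ (2:ℝ) = ∫ x in Q3, (g x)^2 := by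
    refine integral_congr_ae (Filter.Eventually.of_forall fun x => ?_)
    show |g x| ^ (2:ℝ) = (g x)^2
    rw [show (2:ℝ) = ((2:ℕ):ℝ) by norm_num, Real.rpow_natCast, sq_abs]
  rw [e1, e2] at step2
  calc ∫ x in Q3, f x * g x ≤ ∫ x in Q3, |f x| * |g x| := step1
    _ ≤ (∫ x in Q3, (f x)^2) ^ (1/(2:ℝ)) * (∫ x in Q3, (g x)^2) ^ (1/(2:ℝ)) := step2
    _ = L2 f * L2 g := by
        rw [L2, L2, Real.sqrt_eq_rpow, Real.sqrt_eq_rpow]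

lemma L2_add_le {f g : (Fin 3 → ℝ) → ℝ} (hf : Continuous f) (hg : Continuous g) :
    L2 (fun x => f x + g x) ≤ L2 f + L2 g := by
  have hint : ∫ x in Q3, (f x + g x)^2
      = (∫ x in Q3, (f x)^2) + (2 * ∫ x in Q3, f x * g x) + ∫ x in Q3, (g x)^2 := by
    have i1 : IntegrableOn (fun x => (f x)^2 + 2*(f x * g x)) Q3 :=
      intOn ((hf.pow 2).add (continuous_const.mul (hf.mul hg)))
    calc ∫ x in Q3, (f x + g x)^2
        = ∫ x in Q3, ((f x)^2 + 2*(f x * g x) + (g x)^2) :=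
          integral_congr_ae (Filter.Eventually.of_forall fun x => by show (f x + g x)^2 = _; ring)
      _ = (∫ x in Q3, ((f x)^2 + 2*(f x * g x))) + ∫ x in Q3, (g x)^2 :=
          integral_add i1 (intOn (hg.pow 2))
      _ = ((∫ x in Q3, (f x)^2) + ∫ x in Q3, 2*(f x * g x)) + ∫ x in Q3, (g x)^2 := by
          rw [integral_add (f := fun x => (f x)^2) (g := fun x => 2*(f x * g x)) (intOn (hf.pow 2)) ((intOn (hf.mul hg)).const_mul 2)]
      _ = (∫ x in Q3, (f x)^2) + (2 * ∫ x in Q3, f x * g x) + ∫ x in Q3, (g x)^2 := by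
          rw [integral_const_mul]
  have hf2 : 0 ≤ ∫ x in Q3, (f x)^2 := integral_nonneg fun x => sq_nonneg _
  have hg2 : 0 ≤ ∫ x in Q3, (g x)^2 := integral_nonneg fun x => sq_nonneg _
  have hcs := L2_cauchy_schwarz hf hg
  have hb : ∫ x in Q3, (f x + g x)^2 ≤ (L2 f + L2 g)^2 := by
    have e1 : (L2 f)^2 = ∫ x in Q3, (f x)^2 := Real.sq_sqrt hf2
    have e2 : (L2 g)^2 = ∫ x in Q3, (g x)^2 := Real.sq_sqrt hg2
    rw [hint]; nlinarith [hcs]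
  calc L2 (fun x => f x + g x) = Real.sqrt (∫ x in Q3, (f x + g x)^2) := rfl
    _ ≤ Real.sqrt ((L2 f + L2 g)^2) := Real.sqrt_le_sqrt hb
    _ = L2 f + L2 g := Real.sqrt_sq (add_nonneg (L2_nonneg f) (L2_nonneg g))

lemma L2_const_mul (c : ℝ) (f : (Fin 3 → ℝ) → ℝ) :
    L2 (fun x => c * f x) = |c| * L2 f := by
  have : ∫ x in Q3, (c * f x)^2 = c^2 * ∫ x in Q3, (f x)^2 := by
    rw [← integral_const_mul]
    exact integral_congr_ae (Filter.Eventually.of_forall fun x => by show (c * f x)^2 = _; ring)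
  rw [L2, this, Real.sqrt_mul (sq_nonneg c), Real.sqrt_sq_eq_abs, L2]

lemma L2_neg (f : (Fin 3 → ℝ) → ℝ) : L2 (fun x => -(f x)) = L2 f := by
  unfold L2
  congr 1
  refine integral_congr_ae (Filter.Eventually.of_forall fun x => ?_)
  show (-(f x))^2 = (f x)^2
  ring

lemma L2_rev_triangle {f g : (Fin 3 → ℝ) → ℝ} (hf : Continuous f) (hg : Continuous g) :
    L2 f ≤ L2 (fun x => f x + g x) + L2 g := by
  have h1 : L2 f = L2 (fun x => (f x + g x) + -(g x)) := by
    congr 1; funext x; ring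
  rw [h1]
  calc L2 (fun x => (f x + g x) + -(g x))
      ≤ L2 (fun x => f x + g x) + L2 (fun x => -(g x)) :=
        L2_add_le (hf.add hg) hg.neg
    _ = L2 (fun x => f x + g x) + L2 g := by rw [L2_neg]

lemma contDiff_fF {ε : ℝ} {φ : (Fin 3 → ℝ) → ℝ} (hφ : ContDiff ℝ (⊤ : ℕ∞) φ) :
    ContDiff ℝ (⊤ : ℕ∞) (fF ε φ) :=
  (contDiff_const.mul (contDiff_lap hφ)).add
    ((contDiff_const.mul ((hφ.pow 2).sub contDiff_const)).mul hφ)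

lemma contDiff_gF {ε : ℝ} {φ : (Fin 3 → ℝ) → ℝ} (hφ : ContDiff ℝ (⊤ : ℕ∞) φ) :
    ContDiff ℝ (⊤ : ℕ∞) (gF ε φ) :=
  (contDiff_lap (contDiff_fF hφ)).neg.add
    ((contDiff_const.mul ((contDiff_const.mul (hφ.pow 2)).sub contDiff_const)).mul
      (contDiff_fF hφ))

lemma contDiff_varE {k ε M₁ M₂ α β : ℝ} {φ : (Fin 3 → ℝ) → ℝ} (hφ : ContDiff ℝ (⊤ : ℕ∞) φ) :
    ContDiff ℝ (⊤ : ℕ∞) (varE k ε M₁ M₂ α β φ) :=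
  ((contDiff_const.mul (contDiff_gF hφ)).add contDiff_const).add
    (contDiff_const.mul (contDiff_fF hφ))

lemma contDiff_Hlow {k ε M₁ M₂ α β : ℝ} {φ : (Fin 3 → ℝ) → ℝ} (hφ : ContDiff ℝ (⊤ : ℕ∞) φ) :
    ContDiff ℝ (⊤ : ℕ∞) (Hlow k ε M₁ M₂ α β φ) :=
  (contDiff_varE hφ).sub (contDiff_const.mul (contDiff_lap (contDiff_lap hφ)))

lemma L2_le_H2 {f : (Fin 3 → ℝ) → ℝ} (hf : ContDiff ℝ (⊤ : ℕ∞) f) : L2 f ≤ H2norm f := by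
  refine Real.sqrt_le_sqrt ?_
  have hcont : Continuous fun x =>
      (f x)^2 + (∑ i, (pd i f x)^2) + ∑ i, ∑ j, (pd i (pd j f) x)^2 := by
    refine ((hf.continuous.pow 2).add ?_).add ?_
    · exact continuous_finset_sum _ fun i _ => ((contDiff_pd hf i).continuous.pow 2)
    · exact continuous_finset_sum _ fun i _ => continuous_finset_sum _ fun j _ =>
        ((contDiff_pd (contDiff_pd hf j) i).continuous.pow 2)
  refine setIntegral_mono_on (intOn (hf.continuous.pow 2)) (intOn hcont) measurableSet_Q3
    fun x _ => ?_
  have h1 : (0:ℝ) ≤ ∑ i, (pd i f x)^2 := Finset.sum_nonneg fun i _ => sq_nonneg _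
  have h2 : (0:ℝ) ≤ ∑ i, ∑ j, (pd i (pd j f) x)^2 :=
    Finset.sum_nonneg fun i _ => Finset.sum_nonneg fun j _ => sq_nonneg _
  show (f x)^2 ≤ _
  linarith

lemma H2_nonneg (f : (Fin 3 → ℝ) → ℝ) : 0 ≤ H2norm f := Real.sqrt_nonneg _

end LSaux

/-- Extension of the Łojasiewicz–Simon inequality from an `H⁴`- to an
`H²`-neighborhood of a critical point `ψ` of `E`. -/
theorem lojasiewicz_simon_H2_extension (k ε M₁ M₂ α β : ℝ)
    (hk : 0 < k) (hε : 0 < ε) (hM₁ : 0 < M₁) (hM₂ : 0 < M₂)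
    (ψ : (Fin 3 → ℝ) → ℝ) (hψ : ContDiff ℝ (⊤ : ℕ∞) ψ) (hψper : Periodic3 ψ)
    -- ψ is a critical point of E
    (hcrit : ∀ x, varE k ε M₁ M₂ α β ψ x = 0)
    (β₁ θ : ℝ) (hβ₁ : 0 < β₁) (hθ : θ ∈ Set.Ioo (0:ℝ) (1/2))
    -- Łojasiewicz–Simon inequality on the H⁴-neighborhood
    (hLS : ∀ φ : (Fin 3 → ℝ) → ℝ, ContDiff ℝ (⊤ : ℕ∞) φ → Periodic3 φ →
      H4norm (φ - ψ) < β₁ →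
      |Efun k ε M₁ M₂ α β φ - Efun k ε M₁ M₂ α β ψ| ^ (1 - θ)
        ≤ L2 (varE k ε M₁ M₂ α β φ))
    -- (a) elliptic estimate
    (M : ℝ) (hM : 0 < M)
    (hell : ∀ φ : (Fin 3 → ℝ) → ℝ, ContDiff ℝ (⊤ : ℕ∞) φ → Periodic3 φ →
      H4norm (φ - ψ) ≤ M * (L2 (lap (lap (φ - ψ))) + L2 (φ - ψ)))
    -- (b) Lipschitz continuity of H and E in H² on the unit H²-ball around ψ
    (C₁ C₂ : ℝ) (hC₁ : 0 < C₁) (hC₂ : 0 < C₂)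
    (hHlip : ∀ φ : (Fin 3 → ℝ) → ℝ, ContDiff ℝ (⊤ : ℕ∞) φ → Periodic3 φ →
      H2norm (φ - ψ) ≤ 1 →
      L2 (fun x => Hlow k ε M₁ M₂ α β φ x - Hlow k ε M₁ M₂ α β ψ x)
        ≤ C₂ * H2norm (φ - ψ))
    (hElip : ∀ φ : (Fin 3 → ℝ) → ℝ, ContDiff ℝ (⊤ : ℕ∞) φ → Periodic3 φ →
      H2norm (φ - ψ) ≤ 1 →
      |Efun k ε M₁ M₂ α β φ - Efun k ε M₁ M₂ α β ψ| ≤ C₁ * H2norm (φ - ψ)) :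
    ∃ β' > (0:ℝ), ∀ φ : (Fin 3 → ℝ) → ℝ, ContDiff ℝ (⊤ : ℕ∞) φ → Periodic3 φ →
      H2norm (φ - ψ) < β' →
      |Efun k ε M₁ M₂ α β φ - Efun k ε M₁ M₂ α β ψ| ^ (1 - θ)
        ≤ L2 (varE k ε M₁ M₂ α β φ) := by
  obtain ⟨hθ0, hθh⟩ := hθ
  have h1θ : 0 < 1 - θ := by linarith
  set c := k * ε * β₁ / (4 * M) with hc
  have hc0 : 0 < c := by positivity
  refine ⟨min 1 (min (β₁/(2*M)) (min (k*ε*β₁/(4*M*C₂)) (c ^ (1-θ)⁻¹ / C₁))), by positivity, ?_⟩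
  intro φ hφ hφper hH2
  rw [lt_min_iff, lt_min_iff, lt_min_iff] at hH2
  obtain ⟨hb1, hb2, hb3, hb4⟩ := hH2
  by_cases h4 : H4norm (φ - ψ) < β₁
  · exact hLS φ hφ hφper h4
  · push_neg at h4
    have hD : ContDiff ℝ (⊤ : ℕ∞) (φ - ψ) := hφ.sub hψ
    have hH2' : H2norm (φ - ψ) ≤ 1 := hb1.le
    set A2 := L2 (lap (lap (φ - ψ))) with hA2def
    set LD := L2 (φ - ψ) with hLDdef
    set HD := L2 (fun x => Hlow k ε M₁ M₂ α β φ x - Hlow k ε M₁ M₂ α β ψ x) with hHDdef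
    set L := L2 (varE k ε M₁ M₂ α β φ) with hLdef
    -- lower bound on A2
    have hLD : LD ≤ H2norm (φ - ψ) := L2_le_H2 hD
    have hellφ := hell φ hφ hφper
    have hA2 : β₁/(2*M) ≤ A2 := by
      have h1 : β₁ / M ≤ A2 + LD := by
        rw [div_le_iff₀ hM]
        calc β₁ ≤ H4norm (φ - ψ) := h4
          _ ≤ M * (A2 + LD) := hellφ
          _ = (A2 + LD) * M := by ring
      have h2 : β₁/(2*M) + β₁/(2*M) = β₁/M := by field_simp; ring
      linarith
    -- triangle inequality
    have key : ∀ x, k*ε*(lap (lap (φ - ψ)) x)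
        = varE k ε M₁ M₂ α β φ x
          + -(Hlow k ε M₁ M₂ α β φ x - Hlow k ε M₁ M₂ α β ψ x) := by
      intro x
      have h4s : lap (lap (φ - ψ)) x = lap (lap φ) x - lap (lap ψ) x := by
        rw [lap_lap_sub hφ hψ]; rfl
      have hz := hcrit x
      simp only [Hlow]
      rw [h4s, hz]
      ring
    have tri : k*ε*A2 ≤ L + HD := by
      have e1 : L2 (fun x => k*ε*(lap (lap (φ - ψ)) x)) = (k*ε) * A2 := by
        rw [show (fun x => k*ε*(lap (lap (φ - ψ)) x)) = fun x => (k*ε) * (lap (lap (φ - ψ)) x)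
          from rfl, L2_const_mul, abs_of_pos (by positivity), hA2def]
      calc k*ε*A2 = L2 (fun x => k*ε*(lap (lap (φ - ψ)) x)) := e1.symm
        _ = L2 (fun x => varE k ε M₁ M₂ α β φ x
              + -(Hlow k ε M₁ M₂ α β φ x - Hlow k ε M₁ M₂ α β ψ x)) := by
            congr 1; funext x; exact key x
        _ ≤ L2 (varE k ε M₁ M₂ α β φ)
              + L2 (fun x => -(Hlow k ε M₁ M₂ α β φ x - Hlow k ε M₁ M₂ α β ψ x)) := by
            have hcont1 : Continuous (varE k ε M₁ M₂ α β φ) := (contDiff_varE hφ).continuous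
            have hcont2 : Continuous fun x =>
                Hlow k ε M₁ M₂ α β φ x - Hlow k ε M₁ M₂ α β ψ x :=
              (contDiff_Hlow hφ).continuous.sub (contDiff_Hlow hψ).continuous
            exact L2_add_le hcont1 hcont2.neg
        _ = L + HD := by rw [L2_neg]
    -- bound HD
    have hHD : HD ≤ c := by
      have h1 : HD ≤ C₂ * H2norm (φ - ψ) := hHlip φ hφ hφper hH2'
      have h2 : C₂ * H2norm (φ - ψ) ≤ C₂ * (k*ε*β₁/(4*M*C₂)) :=
        mul_le_mul_of_nonneg_left hb3.le hC₂.le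
      have h3 : C₂ * (k*ε*β₁/(4*M*C₂)) = c := by rw [hc]; field_simp
      linarith
    -- lower bound on L
    have hLc : c ≤ L := by
      have h1 : k*ε*(β₁/(2*M)) ≤ k*ε*A2 :=
        mul_le_mul_of_nonneg_left hA2 (by positivity)
      have h2 : k*ε*(β₁/(2*M)) = 2*c := by rw [hc]; field_simp; ring
      linarith
    -- upper bound on |E|^(1-θ)
    have hE : |Efun k ε M₁ M₂ α β φ - Efun k ε M₁ M₂ α β ψ| ≤ c ^ (1-θ)⁻¹ := by
      have h1 := hElip φ hφ hφper hH2'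
      have h2 : C₁ * H2norm (φ - ψ) ≤ C₁ * (c ^ (1-θ)⁻¹ / C₁) :=
        mul_le_mul_of_nonneg_left hb4.le hC₁.le
      have h3 : C₁ * (c ^ (1-θ)⁻¹ / C₁) = c ^ (1-θ)⁻¹ := by field_simp
      linarith
    have hfinal : |Efun k ε M₁ M₂ α β φ - Efun k ε M₁ M₂ α β ψ| ^ (1-θ) ≤ c := by
      calc |Efun k ε M₁ M₂ α β φ - Efun k ε M₁ M₂ α β ψ| ^ (1-θ)
          ≤ (c ^ (1-θ)⁻¹) ^ (1-θ) := Real.rpow_le_rpow (abs_nonneg _) hE h1θ.le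
        _ = c ^ ((1-θ)⁻¹ * (1-θ)) := (Real.rpow_mul hc0.le _ _).symm
        _ = c := by rw [inv_mul_cancel₀ h1θ.ne', Real.rpow_one]
    linarith
end
end
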